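/- Let k ≥ 2 be an integer, let G be a graph, and let S ⊆ V(G) such that there is no tangle of (G,S) of order k. Then for every set R ⊆ V(G) with |R| ≤ 7k−8, there is a tree decomposition of (G,S) of width at most 10k−12 with a bag containing R. In particular tw(G,S) ≤ 10k−12. -/

import Mathlib

open SimpleGraph

/-- A separation of a graph `G`: a pair `(A,B)` of subgraphs with `A ⊔ B = G`
and no edge in both `A` and `B`. -/
structure Separation {V : Type} (G : SimpleGraph V) where
  A : G.Subgraph
  B : G.Subgraph
  union_eq : A ⊔ B = ⊤
  edge_disjoint : ∀ u v : V, A.Adj u v → B.Adj u v → False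

namespace Separation

variable {V : Type} {G : SimpleGraph V}

/-- The order of a separation: `|V(A) ∩ V(B)|`. -/
noncomputable def order (s : Separation G) : ℕ := (s.A.verts ∩ s.B.verts).ncard

/-- The reversed separation `(B,A)`. -/
def flip (s : Separation G) : Separation G :=
  ⟨s.B, s.A, by rw [sup_comm]; exact s.union_eq,
    fun u v hb ha => s.edge_disjoint u v ha hb⟩

end Separation

/-- `𝒯` is a tangle of order `k` in `G`. -/
def IsTangle {V : Type} (G : SimpleGraph V) (k : ℕ) (𝒯 : Set (Separation G)) : Prop :=
  (∀ s ∈ 𝒯, s.order < k) ∧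
  (∀ s : Separation G, s.order ≤ k - 1 → s ∈ 𝒯 ∨ s.flip ∈ 𝒯) ∧
  (∀ s₁ ∈ 𝒯, ∀ s₂ ∈ 𝒯, ∀ s₃ ∈ 𝒯,
    s₁.A ⊔ s₂.A ⊔ s₃.A ≠ (⊤ : G.Subgraph)) ∧
  (∀ s ∈ 𝒯, s.A.verts ≠ Set.univ)

/-- `𝒯` is a tangle of `(G,S)` of order `k`: a tangle of `G` such that
no member `(A,B)` has `S ⊆ V(A)`. -/
def IsTangleS {V : Type} (G : SimpleGraph V) (S : Set V) (k : ℕ)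
    (𝒯 : Set (Separation G)) : Prop :=
  IsTangle G k 𝒯 ∧ ∀ s ∈ 𝒯, ¬ S ⊆ s.A.verts

/-- The tangle number of `(G,S)`: the maximum order of a tangle of `(G,S)`. -/
noncomputable def tangleNum {V : Type} (G : SimpleGraph V) (S : Set V) : ℕ :=
  sSup {k | ∃ 𝒯 : Set (Separation G), IsTangleS G S k 𝒯}

/-- `u` and `v` are joined by a walk avoiding `U`. -/
def ReachOutside {V : Type} (G : SimpleGraph V) (U : Set V) (u v : V) : Prop :=
  ∃ p : G.Walk u v, ∀ x ∈ p.support, x ∉ U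

/-- A tree decomposition of `(G,S)`: a tree decomposition of the induced subgraph of
`G` on the union of the bags, a set containing `S`, such that every component of `G`
minus the union of the bags has all its neighbors in `G` inside a single bag. -/
structure TreeDecompS {V ι : Type} (G : SimpleGraph V) (S : Set V) (T : SimpleGraph ι) where
  isTree : T.IsTree
  bag : ι → Set V
  S_subset : S ⊆ ⋃ x, bag x
  edge_in_bag : ∀ u v : V, u ∈ ⋃ x, bag x → v ∈ ⋃ x, bag x → G.Adj u v →
    ∃ x, u ∈ bag x ∧ v ∈ bag x
  bags_connected : ∀ v ∈ ⋃ x, bag x, (T.induce {x | v ∈ bag x}).Connected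
  comp_in_bag : ∀ v, v ∉ (⋃ x, bag x) → ∃ x, ∀ w y : V,
    ReachOutside G (⋃ x', bag x') v w → G.Adj w y → y ∈ ⋃ x', bag x' → y ∈ bag x

/-- `(G,S)` has a tree decomposition of width at most `n`. -/
def HasTreewidthSLE {V : Type} (G : SimpleGraph V) (S : Set V) (n : ℕ) : Prop :=
  ∃ (ι : Type) (T : SimpleGraph ι) (d : TreeDecompS G S T), ∀ x, (d.bag x).ncard ≤ n + 1

/-- The treewidth of `(G,S)`. -/
noncomputable def twS {V : Type} (G : SimpleGraph V) (S : Set V) : ℕ :=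
  sInf {n | HasTreewidthSLE G S n}

/-- A path decomposition of `(G,S)` with bags indexed by `Fin m`. -/
structure PathDecompS {V : Type} (G : SimpleGraph V) (S : Set V) (m : ℕ) where
  bag : Fin m → Set V
  S_subset : S ⊆ ⋃ i, bag i
  edge_in_bag : ∀ u v : V, u ∈ ⋃ i, bag i → v ∈ ⋃ i, bag i → G.Adj u v →
    ∃ i, u ∈ bag i ∧ v ∈ bag i
  interval : ∀ (v : V) (i j l : Fin m), i ≤ j → j ≤ l → v ∈ bag i → v ∈ bag l → v ∈ bag j
  comp_in_bag : ∀ v, v ∉ (⋃ i, bag i) → ∃ i, ∀ w y : V,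
    ReachOutside G (⋃ i', bag i') v w → G.Adj w y → y ∈ ⋃ i', bag i' → y ∈ bag i

/-- The pathwidth of `(G,S)`. -/
noncomputable def pwS {V : Type} (G : SimpleGraph V) (S : Set V) : ℕ :=
  sInf {n | ∃ (m : ℕ) (d : PathDecompS G S m), ∀ i, (d.bag i).ncard ≤ n + 1}

/-- An elimination forest of `(G,S)`, encoded by its (reflexive) ancestor relation `anc`
on the vertex set `W` of an induced subgraph of `G` containing `S`.  Edges of the induced
subgraph join comparable vertices, and the neighborhood of every component of `G - W`
is a chain (equivalently, lies on a single root-to-leaf path). -/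
structure ElimForestS {V : Type} (G : SimpleGraph V) (S : Set V) where
  W : Set V
  S_subset : S ⊆ W
  anc : V → V → Prop
  anc_dom : ∀ u v, anc u v → u ∈ W ∧ v ∈ W
  anc_refl : ∀ v ∈ W, anc v v
  anc_antisymm : ∀ u v, anc u v → anc v u → u = v
  anc_trans : ∀ u v w, anc u v → anc v w → anc u w
  ancestors_chain : ∀ u₁ u₂ v, anc u₁ v → anc u₂ v → anc u₁ u₂ ∨ anc u₂ u₁
  edges_comparable : ∀ u v, u ∈ W → v ∈ W → G.Adj u v → anc u v ∨ anc v u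
  comp_chain : ∀ v, v ∉ W → ∀ w₁ w₂ y₁ y₂ : V,
    ReachOutside G W v w₁ → ReachOutside G W v w₂ →
    G.Adj w₁ y₁ → G.Adj w₂ y₂ → y₁ ∈ W → y₂ ∈ W → anc y₁ y₂ ∨ anc y₂ y₁

/-- The vertex-height of an elimination forest is at most `h`:
every chain of the ancestor order has at most `h` elements. -/
def ElimForestS.HeightLE {V : Type} {G : SimpleGraph V} {S : Set V}
    (F : ElimForestS G S) (h : ℕ) : Prop :=
  ∀ c : Finset V, (∀ x ∈ c, ∀ y ∈ c, F.anc x y ∨ F.anc y x) → c.card ≤ h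

/-- The treedepth of `(G,S)`: minimum vertex-height of an elimination forest of `(G,S)`. -/
noncomputable def tdS {V : Type} (G : SimpleGraph V) (S : Set V) : ℕ :=
  sInf {h | ∃ F : ElimForestS G S, F.HeightLE h}

/-- `B` is a model of `H` in `G`: pairwise disjoint nonempty connected branch sets,
with an edge of `G` between the branch sets of any two adjacent vertices of `H`. -/
structure IsModelOn {V W : Type} (G : SimpleGraph V) (H : SimpleGraph W)
    (B : W → Set V) : Prop where
  pairwise_disjoint : ∀ x y, x ≠ y → Disjoint (B x) (B y)
  nonempty : ∀ x, (B x).Nonempty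
  connected : ∀ x, (G.induce (B x)).Connected
  adj : ∀ x y, H.Adj x y → ∃ u ∈ B x, ∃ v ∈ B y, G.Adj u v

/-- `G` contains no model of `H`, i.e. `G` is `H`-minor-free. -/
def MinorFree {V W : Type} (G : SimpleGraph V) (H : SimpleGraph W) : Prop :=
  ¬ ∃ B : W → Set V, IsModelOn G H B

/-- A family of `n` pairwise vertex-disjoint `X`–`Y` paths in `G`. -/
structure DisjointXYPaths {V : Type} (G : SimpleGraph V) (X Y : Set V) (n : ℕ) where
  a : Fin n → V
  b : Fin n → V
  p : ∀ i, G.Walk (a i) (b i)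
  isPath : ∀ i, (p i).IsPath
  mem_X : ∀ i, a i ∈ X
  mem_Y : ∀ i, b i ∈ Y
  internal : ∀ i, ∀ v ∈ (p i).support, v ≠ a i → v ≠ b i → v ∉ X ∪ Y
  disjoint : ∀ i j, i ≠ j → ∀ v, v ∈ (p i).support → v ∉ (p j).support

/-- The graph obtained from `H` by adding a universal vertex. -/
def addUniversal {W : Type} (H : SimpleGraph W) : SimpleGraph (W ⊕ Unit) :=
  SimpleGraph.fromRel (fun a b =>
    (∃ x y, a = Sum.inl x ∧ b = Sum.inl y ∧ H.Adj x y) ∨ (∃ x, a = Sum.inl x ∧ b = Sum.inr ()))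

/-- The fan on `ℓ + 1` vertices: the path on `ℓ` vertices plus a universal vertex. -/
def fanGraph (ℓ : ℕ) : SimpleGraph (Fin ℓ ⊕ Unit) := addUniversal (SimpleGraph.pathGraph ℓ)

/-- `X` is a fan: it becomes a path after removal of at most one vertex. -/
def IsFan {W : Type} (X : SimpleGraph W) : Prop :=
  (∃ n : ℕ, Nonempty (X ≃g SimpleGraph.pathGraph n)) ∨
  (∃ x₀ : W, ∃ n : ℕ, Nonempty (X.induce {v | v ≠ x₀} ≃g SimpleGraph.pathGraph n))

/-- `X` is an apex-forest: it becomes a forest after removal of at most one vertex. -/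
def IsApexForest {W : Type} (X : SimpleGraph W) : Prop :=
  X.IsAcyclic ∨ ∃ x₀ : W, (X.induce {v | v ≠ x₀}).IsAcyclic

/-- `f` assigns layers to the vertices of `G`: every edge joins vertices in the same
or in consecutive layers. -/
def IsLayering {V : Type} (G : SimpleGraph V) (f : V → ℕ) : Prop :=
  ∀ u v, G.Adj u v → f u ≤ f v + 1 ∧ f v ≤ f u + 1

/-- `G` has layered pathwidth at most `c`. -/
def LayeredPathwidthLE {V : Type} (G : SimpleGraph V) (c : ℕ) : Prop :=
  ∃ (m : ℕ) (d : PathDecompS G Set.univ m) (f : V → ℕ),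
    IsLayering G f ∧ ∀ (i : Fin m) (j : ℕ), (d.bag i ∩ f ⁻¹' {j}).ncard ≤ c

/-- `G` has layered treedepth at most `c`: there are an elimination forest of `G` and a
layering such that every root-to-leaf path meets every layer in at most `c` vertices. -/
def LayeredTreedepthLE {V : Type} (G : SimpleGraph V) (c : ℕ) : Prop :=
  ∃ (F : ElimForestS G Set.univ) (f : V → ℕ),
    IsLayering G f ∧ ∀ (v : V) (j : ℕ), ({u | F.anc u v} ∩ f ⁻¹' {j}).ncard ≤ c


/-! ### Auxiliary infrastructure for the proof -/

section ROLemmas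
variable {V : Type} {G : SimpleGraph V}

namespace ReachOutside

lemma refl {U : Set V} {v : V} (hv : v ∉ U) : ReachOutside G U v v :=
  ⟨SimpleGraph.Walk.nil, by simp [hv]⟩

lemma symm {U : Set V} {u v : V} (h : ReachOutside G U u v) : ReachOutside G U v u := by
  obtain ⟨p, hp⟩ := h
  exact ⟨p.reverse, by simpa using hp⟩

lemma trans {U : Set V} {u v w : V} (h : ReachOutside G U u v)
    (h' : ReachOutside G U v w) : ReachOutside G U u w := by
  obtain ⟨p, hp⟩ := h; obtain ⟨q, hq⟩ := h'
  refine ⟨p.append q, fun x hx => ?_⟩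
  rw [Walk.mem_support_append_iff] at hx
  exact hx.elim (hp x) (hq x)

lemma left_notMem {U : Set V} {u v : V} (h : ReachOutside G U u v) : u ∉ U := by
  obtain ⟨p, hp⟩ := h; exact hp u p.start_mem_support

lemma right_notMem {U : Set V} {u v : V} (h : ReachOutside G U u v) : v ∉ U := by
  obtain ⟨p, hp⟩ := h; exact hp v p.end_mem_support

lemma step {U : Set V} {u v w : V} (h : ReachOutside G U u v) (ha : G.Adj v w)
    (hw : w ∉ U) : ReachOutside G U u w := by
  refine trans h ⟨Walk.cons ha Walk.nil, ?_⟩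
  intro x hx
  simp only [Walk.support_cons, Walk.support_nil, List.mem_cons, List.mem_singleton] at hx
  rcases hx with rfl | hx
  · exact right_notMem h
  · simp at hx; subst hx; exact hw

lemma confine {U Q : Set V} (hQ : ∀ a ∈ Q, ∀ b, G.Adj a b → b ∉ U → b ∈ Q)
    {v w : V} (hv : v ∈ Q) (h : ReachOutside G U v w) : w ∈ Q := by
  obtain ⟨p, hp⟩ := h
  induction p with
  | nil => exact hv
  | @cons a b c ha p ih =>
    refine ih ?_ fun x hx => hp x (by simp [hx])
    exact hQ a hv b ha (hp b (by simp))

lemma weaken {U U' : Set V} (hUU : U' ⊆ U) {u v : V} (h : ReachOutside G U u v) :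
    ReachOutside G U' u v := by
  obtain ⟨p, hp⟩ := h
  exact ⟨p, fun x hx hxU => hp x hx (hUU hxU)⟩

end ReachOutside
end ROLemmas

/-- The universal tree on `List ℕ`: `x` adjacent to `x ++ [n]`. -/
def T0 : SimpleGraph (List ℕ) where
  Adj x y := (∃ n, y = x ++ [n]) ∨ (∃ n, x = y ++ [n])
  symm := by constructor; intro x y h; tauto
  loopless := by
    constructor; intro x h
    rcases h with ⟨n, h⟩ | ⟨n, h⟩ <;> · have := congrArg List.length h; simp at this

lemma T0_adj {x y : List ℕ} : T0.Adj x y ↔ (∃ n, y = x ++ [n]) ∨ (∃ n, x = y ++ [n]) :=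
  Iff.rfl

lemma T0_adj_concat (x : List ℕ) (n : ℕ) : T0.Adj x (x ++ [n]) := Or.inl ⟨n, rfl⟩

lemma T0_reachable_nil (x : List ℕ) : T0.Reachable x [] := by
  induction x using List.reverseRecOn with
  | nil => exact Reachable.refl _
  | append_singleton xs n ih => exact (Reachable.symm (Adj.reachable (T0_adj_concat xs n))).trans ih |>.symm.symm

lemma T0_connected : T0.Connected := by
  rw [connected_iff]
  refine ⟨fun x y => (T0_reachable_nil x).trans (T0_reachable_nil y).symm, ⟨[]⟩⟩

lemma T0_adj_len_le {M b : List ℕ} (h : T0.Adj M b) (hlen : b.length ≤ M.length) :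
    b = M.dropLast := by
  rcases h with ⟨n, rfl⟩ | ⟨n, h⟩
  · simp at hlen
  · rw [h]; simp

lemma T0_no_max_cycle : ∀ (M : List ℕ) (c : T0.Walk M M), c.IsCycle →
    (∀ y ∈ c.support, y.length ≤ M.length) → False := by
  intro M c hc hmax
  cases c with
  | nil => exact Walk.IsCycle.not_of_nil hc
  | @cons _ b _ ha p =>
    have hb : b = M.dropLast := by
      refine T0_adj_len_le ha (hmax b ?_)
      simp [Walk.support_cons]
    have hlen3 := hc.three_le_length
    simp only [Walk.length_cons] at hlen3
    -- p.reverse is a walk from M to b, nonempty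
    have hpnil : ¬ p.reverse.Nil := by
      rw [Walk.nil_iff_length_eq, Walk.length_reverse]
      omega
    obtain ⟨b2, ha2, q, hq⟩ := Walk.not_nil_iff.mp hpnil
    have hb2mem : b2 ∈ p.support := by
      have : b2 ∈ p.reverse.support := by rw [hq]; simp
      rwa [Walk.support_reverse, List.mem_reverse] at this
    have hb2 : b2 = M.dropLast := by
      refine T0_adj_len_le ha2 (hmax b2 ?_)
      simp [Walk.support_cons, hb2mem]
    have hedge : s(M, b2) ∈ p.edges := by
      have : s(M, b2) ∈ p.reverse.edges := by rw [hq]; simp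
      rwa [Walk.edges_reverse, List.mem_reverse] at this
    have hnodup : (Walk.cons ha p).edges.Nodup := hc.isTrail.edges_nodup
    rw [Walk.edges_cons] at hnodup
    rw [hb2, ← hb] at hedge
    exact (List.nodup_cons.mp hnodup).1 hedge

lemma T0_isAcyclic : T0.IsAcyclic := by
  intro v c hc
  obtain ⟨M, hMarg⟩ : ∃ M, c.support.argmax List.length = some M := by
    cases h : c.support.argmax List.length with
    | none => rw [List.argmax_eq_none] at h; exact absurd h c.support_ne_nil
    | some M => exact ⟨M, rfl⟩
  have hMmem : M ∈ c.support := List.argmax_mem hMarg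
  have hMmax : ∀ y ∈ c.support, y.length ≤ M.length := fun y hy =>
    not_lt.mp (List.not_lt_of_mem_argmax hy hMarg)
  refine T0_no_max_cycle M (c.rotate M hMmem) (hc.rotate hMmem) ?_
  intro y hy
  rw [Walk.support_eq_cons] at hy
  simp only [List.mem_cons] at hy
  rcases hy with rfl | hy
  · exact le_refl _
  · refine hMmax y ?_
    have := (Walk.support_rotate c M hMmem).mem_iff (a := y)
    exact List.mem_of_mem_tail (this.mp hy)

lemma T0_isTree : T0.IsTree := ⟨T0_connected, T0_isAcyclic⟩

lemma prefix_dropLast {t x : List ℕ} (h : t <+: x) (hne : t ≠ x) : t <+: x.dropLast := by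
  obtain ⟨r, rfl⟩ := h
  rcases List.eq_nil_or_concat r with rfl | ⟨q, a, rfl⟩
  · simp at hne
  · rw [List.concat_eq_append, ← List.append_assoc, List.dropLast_concat]
    exact ⟨q, rfl⟩

/-- the "connected bags" invariant, in prefix form. -/
def TCprop {V : Type} (bag : List ℕ → Set V) (v : V) : Prop :=
  ∃ t, v ∈ bag t ∧ ∀ x, v ∈ bag x → t <+: x ∧ ∀ z, t <+: z → z <+: x → v ∈ bag z

lemma T0_bags_connected {V : Type} (bag : List ℕ → Set V) (v : V) (h : TCprop bag v) :
    (T0.induce {x | v ∈ bag x}).Connected := by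
  obtain ⟨t, htv, hT⟩ := h
  have key : ∀ n (x : List ℕ), x.length ≤ n → ∀ (hx : v ∈ bag x),
      (T0.induce {y | v ∈ bag y}).Reachable ⟨x, hx⟩ ⟨t, htv⟩ := by
    intro n
    induction n with
    | zero =>
      intro x hlen hx
      have hx0 : x = [] := List.length_eq_zero_iff.mp (Nat.le_zero.mp hlen)
      have ht0 : t = [] := List.prefix_nil.mp (hx0 ▸ (hT x hx).1)
      have : (⟨x, hx⟩ : {y // v ∈ bag y}) = ⟨t, htv⟩ := Subtype.ext (hx0.trans ht0.symm)
      rw [this]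
    | succ n ih =>
      intro x hlen hx
      by_cases hxt : x = t
      · have : (⟨x, hx⟩ : {y // v ∈ bag y}) = ⟨t, htv⟩ := Subtype.ext hxt
        rw [this]
      · have htx : t <+: x := (hT x hx).1
        have hxne : x ≠ [] := by
          rintro rfl
          exact hxt (List.prefix_nil.mp htx).symm
        have htd : t <+: x.dropLast := prefix_dropLast htx (fun h => hxt h.symm)
        have hxd : v ∈ bag x.dropLast := (hT x hx).2 _ htd x.dropLast_prefix
        have hadj : (T0.induce {y | v ∈ bag y}).Adj ⟨x, hx⟩ ⟨x.dropLast, hxd⟩ := by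
          show T0.Adj x x.dropLast
          exact Or.inr ⟨x.getLast hxne, (List.dropLast_append_getLast hxne).symm⟩
        refine hadj.reachable.trans (ih x.dropLast ?_ hxd)
        have := List.length_dropLast (xs := x)
        have := List.length_pos_iff.mpr hxne
        omega
  haveI : Nonempty ↑{x | v ∈ bag x} := ⟨⟨t, htv⟩⟩
  refine ⟨fun a b => ?_⟩
  obtain ⟨a, ha⟩ := a; obtain ⟨b, hb⟩ := b
  exact (key a.length a le_rfl ha).trans (key b.length b le_rfl hb).symm

section SepLemmas
variable {V : Type} {G : SimpleGraph V}

lemma Separation.verts_cover (s : Separation G) : s.A.verts ∪ s.B.verts = Set.univ := by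
  have := congrArg SimpleGraph.Subgraph.verts s.union_eq
  simpa using this

lemma Separation.mem_A_or_B (s : Separation G) (v : V) : v ∈ s.A.verts ∨ v ∈ s.B.verts := by
  have := s.verts_cover
  have hv : v ∈ s.A.verts ∪ s.B.verts := this ▸ Set.mem_univ v
  exact hv

lemma Separation.adj_A_or_B (s : Separation G) {u v : V} (h : G.Adj u v) :
    s.A.Adj u v ∨ s.B.Adj u v := by
  have : (s.A ⊔ s.B).Adj u v := by rw [s.union_eq]; exact h
  exact this

lemma Separation.flip_order (s : Separation G) : s.flip.order = s.order := by
  unfold Separation.order Separation.flip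
  rw [Set.inter_comm]

end SepLemmas

section FindSep
variable {V : Type} [Fintype V] {G : SimpleGraph V} {S : Set V} {k : ℕ}

/-- indicator: `1` if `X` meets `U \ R₂`. -/
noncomputable def eps (U R₂ X : Set V) : ℕ := min 1 ((U \ R₂) ∩ X).ncard

lemma eps_le_one (U R₂ X : Set V) : eps U R₂ X ≤ 1 := min_le_left _ _

lemma eps_eq_one {U R₂ X : Set V} (h : ((U \ R₂) ∩ X).Nonempty) : eps U R₂ X = 1 := by
  unfold eps
  have := Set.ncard_pos (Set.toFinite ((U \ R₂) ∩ X)) |>.mpr h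
  omega

lemma eps_eq_zero {U R₂ X : Set V} (h : (U \ R₂) ∩ X = ∅) : eps U R₂ X = 0 := by
  unfold eps; rw [h]; simp

/-- The decisive failing separation. -/
lemma find_sep (hk : 2 ≤ k)
    (hno : ¬ ∃ 𝒯 : Set (Separation G), IsTangleS G S k 𝒯)
    (U R₂ : Set V) (hsub : R₂ ⊆ U) (hcard : R₂.ncard = 7 * k - 8)
    (hUR : (U \ R₂).Nonempty) :
    ∃ s : Separation G, s.order + 1 ≤ k ∧
      (S ⊆ s.A.verts ∨ 4 * k ≤ 3 * (R₂ ∩ (s.A.verts \ s.B.verts)).ncard +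
        eps U R₂ s.A.verts + 4) ∧
      (S ⊆ s.B.verts ∨ 4 * k ≤ 3 * (R₂ ∩ (s.B.verts \ s.A.verts)).ncard +
        eps U R₂ s.B.verts + 4) := by
  classical
  by_contra hgoal
  apply hno
  refine ⟨{s | s.order < k ∧ ¬ S ⊆ s.A.verts ∧
      3 * (R₂ ∩ (s.A.verts \ s.B.verts)).ncard + eps U R₂ s.A.verts + 5 ≤ 4 * k}, ?_⟩
  refine ⟨⟨fun s hs => hs.1, ?_, ?_, ?_⟩, fun s hs => hs.2.1⟩
  · -- orientation axiom
    intro s hord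
    by_contra hsides
    push_neg at hsides
    obtain ⟨h1, h2⟩ := hsides
    simp only [Set.mem_setOf_eq, not_and, not_le] at h1 h2
    apply hgoal
    refine ⟨s, by omega, ?_, ?_⟩
    · by_cases hS : S ⊆ s.A.verts
      · exact Or.inl hS
      · have := h1 (by omega) hS
        omega
    · by_cases hS : S ⊆ s.B.verts
      · exact Or.inl hS
      · have h2' := h2
        have hfo : s.flip.order = s.order := s.flip_order
        have := h2 (by omega) hS
        simp only [Separation.flip] at this
        omega
  · -- three covers
    rintro s₁ hs₁ s₂ hs₂ s₃ hs₃ hsup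
    obtain ⟨ho₁, -, hc₁⟩ := hs₁
    obtain ⟨ho₂, -, hc₂⟩ := hs₂
    obtain ⟨ho₃, -, hc₃⟩ := hs₃
    have hcover : s₁.A.verts ∪ s₂.A.verts ∪ s₃.A.verts = Set.univ := by
      have := congrArg SimpleGraph.Subgraph.verts hsup
      simpa using this
    -- the R₂-count
    set x₁ := s₁.A.verts \ s₁.B.verts
    set x₂ := s₂.A.verts \ s₂.B.verts
    set x₃ := s₃.A.verts \ s₃.B.verts
    set m₁ := s₁.A.verts ∩ s₁.B.verts
    set m₂ := s₂.A.verts ∩ s₂.B.verts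
    set m₃ := s₃.A.verts ∩ s₃.B.verts
    have hRsub : R₂ ⊆ (R₂ ∩ x₁) ∪ (R₂ ∩ x₂) ∪ (R₂ ∩ x₃) ∪ (m₁ ∪ m₂ ∪ m₃) := by
      intro r hr
      have hrA : r ∈ s₁.A.verts ∪ s₂.A.verts ∪ s₃.A.verts := hcover ▸ Set.mem_univ r
      by_cases hb1 : r ∈ s₁.B.verts
      · rcases s₁.mem_A_or_B r with hA | hB
        · exact Or.inr (Or.inl (Or.inl ⟨hA, hb1⟩))
        · rcases hrA with (h | h) | h
          · exact Or.inr (Or.inl (Or.inl ⟨h, hb1⟩))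
          · by_cases hb2 : r ∈ s₂.B.verts
            · exact Or.inr (Or.inl (Or.inr ⟨h, hb2⟩))
            · exact Or.inl (Or.inl (Or.inr ⟨hr, h, hb2⟩))
          · by_cases hb3 : r ∈ s₃.B.verts
            · exact Or.inr (Or.inr ⟨h, hb3⟩)
            · exact Or.inl (Or.inr ⟨hr, h, hb3⟩)
      · rcases hrA with (h | h) | h
        · exact Or.inl (Or.inl (Or.inl ⟨hr, h, hb1⟩))
        · by_cases hb2 : r ∈ s₂.B.verts
          · exact Or.inr (Or.inl (Or.inr ⟨h, hb2⟩))
          · exact Or.inl (Or.inl (Or.inr ⟨hr, h, hb2⟩))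
        · by_cases hb3 : r ∈ s₃.B.verts
          · exact Or.inr (Or.inr ⟨h, hb3⟩)
          · exact Or.inl (Or.inr ⟨hr, h, hb3⟩)
    have hcount : R₂.ncard ≤ (R₂ ∩ x₁).ncard + (R₂ ∩ x₂).ncard + (R₂ ∩ x₃).ncard
        + (m₁.ncard + m₂.ncard + m₃.ncard) := by
      calc R₂.ncard ≤ ((R₂ ∩ x₁) ∪ (R₂ ∩ x₂) ∪ (R₂ ∩ x₃) ∪ (m₁ ∪ m₂ ∪ m₃)).ncard :=
            Set.ncard_le_ncard hRsub (Set.toFinite _)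
        _ ≤ ((R₂ ∩ x₁) ∪ (R₂ ∩ x₂) ∪ (R₂ ∩ x₃)).ncard + (m₁ ∪ m₂ ∪ m₃).ncard :=
            Set.ncard_union_le _ _
        _ ≤ _ := by
            have a1 := Set.ncard_union_le ((R₂ ∩ x₁) ∪ (R₂ ∩ x₂)) (R₂ ∩ x₃)
            have a2 := Set.ncard_union_le (R₂ ∩ x₁) (R₂ ∩ x₂)
            have b1 := Set.ncard_union_le (m₁ ∪ m₂) m₃
            have b2 := Set.ncard_union_le m₁ m₂
            omega
    -- some Aᵢ meets U \ R₂
    obtain ⟨u, hu⟩ := hUR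
    have humem : u ∈ s₁.A.verts ∪ s₂.A.verts ∪ s₃.A.verts := hcover ▸ Set.mem_univ u
    have hesum : eps U R₂ s₁.A.verts = 1 ∨ eps U R₂ s₂.A.verts = 1 ∨
        eps U R₂ s₃.A.verts = 1 := by
      rcases humem with (h | h) | h
      · exact Or.inl (eps_eq_one ⟨u, hu, h⟩)
      · exact Or.inr (Or.inl (eps_eq_one ⟨u, hu, h⟩))
      · exact Or.inr (Or.inr (eps_eq_one ⟨u, hu, h⟩))
    have hm₁ : m₁.ncard < k := ho₁
    have hm₂ : m₂.ncard < k := ho₂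
    have hm₃ : m₃.ncard < k := ho₃
    rcases hesum with h | h | h <;> omega
  · -- no side is everything
    intro s hs heq
    obtain ⟨ho, -, hc⟩ := hs
    have h1 : R₂.ncard = (R₂ ∩ s.B.verts).ncard + (R₂ \ s.B.verts).ncard :=
      (Set.ncard_inter_add_ncard_diff_eq_ncard R₂ s.B.verts (Set.toFinite _)).symm
    have h2 : (R₂ ∩ s.B.verts).ncard ≤ (s.A.verts ∩ s.B.verts).ncard := by
      refine Set.ncard_le_ncard ?_ (Set.toFinite _)
      rw [heq]; exact fun x hx => ⟨Set.mem_univ x, hx.2⟩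
    have h3 : R₂ ∩ (s.A.verts \ s.B.verts) = R₂ \ s.B.verts := by
      rw [heq]; ext x; simp
    rw [h3] at hc
    have := ho
    unfold Separation.order at this
    omega
end FindSep

section Main
variable {V : Type} [Fintype V] {G : SimpleGraph V} {S : Set V} {k : ℕ}

lemma comp_confine {U bagO : Set V} (hIN : ∀ u ∈ U \ bagO, ∀ w, G.Adj u w → w ∈ U)
    {v : V} (hv : v ∈ U \ bagO) : {w | ReachOutside G bagO v w} ⊆ U \ bagO := by
  intro w hw
  refine ReachOutside.confine ?_ hv hw
  rintro a ha b hab hbO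
  exact ⟨hIN a ha b hab, hbO⟩

lemma comp_eq {bagO : Set V} {v w : V} (hw : ReachOutside G bagO v w) :
    {z | ReachOutside G bagO w z} = {z | ReachOutside G bagO v z} := by
  ext z
  exact ⟨fun hz => hw.trans hz, fun hz => hw.symm.trans hz⟩

lemma comp_side {U bagO : Set V} (va vb : Set V)
    (hAB : ∀ u w, G.Adj u w → (u ∈ va ∧ w ∈ va) ∨ (u ∈ vb ∧ w ∈ vb))
    (hmid : va ∩ vb ∩ U ⊆ bagO)
    (hIN : ∀ u ∈ U \ bagO, ∀ w, G.Adj u w → w ∈ U)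
    {v : V} (hv : v ∈ U \ bagO) (hvA : v ∈ va \ vb) :
    {w | ReachOutside G bagO v w} ⊆ va \ vb := by
  intro w hw
  have : w ∈ (va \ vb) ∩ (U \ bagO) := by
    refine ReachOutside.confine ?_ ⟨hvA, hv⟩ hw
    rintro a ⟨haA, haU⟩ b hab hbO
    have hbU : b ∈ U := hIN a haU b hab
    rcases hAB a b hab with ⟨-, hb⟩ | ⟨ha, -⟩
    · refine ⟨⟨hb, fun hbvb => hbO (hmid ⟨⟨hb, hbvb⟩, hbU⟩)⟩, hbU, hbO⟩
    · exact absurd ha haA.2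
  exact this.1

/-- A partial tree decomposition of the region `U` with boundary `R`. -/
structure Piece (G : SimpleGraph V) (S : Set V) (k : ℕ) (U R : Set V) where
  bag : List ℕ → Set V
  hwidth : ∀ l, (bag l).ncard ≤ 10 * k - 11
  hroot : R ⊆ bag []
  hWU : ∀ l, bag l ⊆ U
  hS : S ∩ U ⊆ ⋃ l, bag l
  hedge : ∀ u v : V, u ∈ ⋃ l, bag l → v ∈ ⋃ l, bag l → G.Adj u v →
      ∃ l, u ∈ bag l ∧ v ∈ bag l
  hTC : ∀ v ∈ ⋃ l, bag l, TCprop bag v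
  hcomp : ∀ v ∈ U, v ∉ (⋃ l, bag l) → ∃ x, ∀ w y, ReachOutside G (⋃ l, bag l) v w →
      G.Adj w y → y ∈ (⋃ l, bag l) → y ∈ bag x

lemma Finset.exists_intermediate_set {α : Type} {A B : Finset α} (i : ℕ)
    (h₁ : i + B.card ≤ A.card) (h₂ : B ⊆ A) :
    ∃ C : Finset α, B ⊆ C ∧ C ⊆ A ∧ C.card = i + B.card :=
  Finset.exists_subsuperset_card_eq h₂ (Nat.le_add_left _ i) h₁

lemma pad_exists (R U : Set V) (m : ℕ) (hRU : R ⊆ U) (hR : R.ncard ≤ m)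
    (hU : m ≤ U.ncard) : ∃ R₂ : Set V, R ⊆ R₂ ∧ R₂ ⊆ U ∧ R₂.ncard = m := by
  classical
  have hRf : R.ncard = R.toFinite.toFinset.card := Set.ncard_eq_toFinset_card R R.toFinite
  have hUf : U.ncard = U.toFinite.toFinset.card := Set.ncard_eq_toFinset_card U U.toFinite
  obtain ⟨C, hBC, hCA, hCcard⟩ := Finset.exists_intermediate_set (A := U.toFinite.toFinset)
    (B := R.toFinite.toFinset) (m - R.toFinite.toFinset.card)
    (by omega)
    (by intro x hx
        exact U.toFinite.mem_toFinset.mpr (hRU (R.toFinite.mem_toFinset.mp hx)))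
  refine ⟨(C : Set V), ?_, ?_, ?_⟩
  · intro x hx
    have : x ∈ R.toFinite.toFinset := R.toFinite.mem_toFinset.mpr hx
    exact hBC this
  · intro x hx
    have := hCA hx
    exact U.toFinite.mem_toFinset.mp this
  · rw [Set.ncard_coe_finset, hCcard]
    omega

lemma terminal_piece (U R : Set V) (hRU : R ⊆ U) (hU : U.ncard ≤ 10 * k - 11) :
    Nonempty (Piece G S k U R) := by
  classical
  refine ⟨⟨fun l => if l = [] then U else ∅, ?_, ?_, ?_, ?_, ?_, ?_, ?_⟩⟩
  · intro l
    by_cases h : l = [] <;> simp [h, hU]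
  · simpa using hRU
  · intro l
    by_cases h : l = [] <;> simp [h]
  · intro v hv
    exact Set.mem_iUnion.mpr ⟨[], by simpa using hv.2⟩
  · intro u v hu hv hadj
    refine ⟨[], ?_, ?_⟩
    · obtain ⟨l, hl⟩ := Set.mem_iUnion.mp hu
      by_cases h : l = []
      · subst h; simpa using hl
      · simp [h] at hl
    · obtain ⟨l, hl⟩ := Set.mem_iUnion.mp hv
      by_cases h : l = []
      · subst h; simpa using hl
      · simp [h] at hl
  · intro v hv
    obtain ⟨l, hl⟩ := Set.mem_iUnion.mp hv
    have hl0 : l = [] := by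
      by_contra h; simp [h] at hl
    subst hl0
    refine ⟨[], by simpa using hl, ?_⟩
    intro x hx
    have hx0 : x = [] := by
      by_contra h; simp [h] at hx
    subst hx0
    exact ⟨List.prefix_refl _, fun z hz hz' => by
      rw [List.prefix_nil.mp hz']; simpa using hl⟩
  · intro v hv hvW
    exact absurd (Set.mem_iUnion.mpr ⟨[], by simpa using hv⟩) hvW

lemma rec_main (hk : 2 ≤ k)
    (hno : ¬ ∃ 𝒯 : Set (Separation G), IsTangleS G S k 𝒯) :
    ∀ (n : ℕ) (U R : Set V), (U \ R).ncard * (7 * k) + R.ncard ≤ n → R ⊆ U →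
    (∀ u ∈ U \ R, ∀ v, G.Adj u v → v ∈ U) → R.ncard ≤ 7 * k - 8 →
    Nonempty (Piece G S k U R) := by
  classical
  intro n
  induction n with
  | zero =>
    intro U R hn hRU hINV hR
    have h0 : U.ncard = (U \ R).ncard + R.ncard :=
      (Set.ncard_diff_add_ncard_of_subset hRU (Set.toFinite _)).symm
    refine terminal_piece U R hRU ?_
    have : 0 < 7 * k := by omega
    nlinarith [Nat.eq_zero_of_le_zero hn]
  | succ n ih =>
    intro U R hn hRU hINV hR
    by_cases hterm : U.ncard ≤ 10 * k - 11
    · exact terminal_piece U R hRU hterm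
    push_neg at hterm
    obtain ⟨R₂, hRR₂, hR₂U, hR₂card⟩ := pad_exists R U (7 * k - 8) hRU hR (by omega)
    have hUsplit : U.ncard = (U \ R).ncard + R.ncard :=
      (Set.ncard_diff_add_ncard_of_subset hRU (Set.toFinite _)).symm
    have hU₂split : U.ncard = (U \ R₂).ncard + R₂.ncard :=
      (Set.ncard_diff_add_ncard_of_subset hR₂U (Set.toFinite _)).symm
    have hUR₂ : (U \ R₂).Nonempty := by
      rw [← Set.ncard_pos (Set.toFinite _)]
      omega
    obtain ⟨s, hord, hsA, hsB⟩ := find_sep hk hno U R₂ hR₂U hR₂card hUR₂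
    set va := s.A.verts with hva_def
    set vb := s.B.verts with hvb_def
    set exA := va \ vb with hexA_def
    set exB := vb \ va with hexB_def
    set bagO := R₂ ∪ ((va ∩ vb) ∩ U) with hbagO_def
    have hmidcard : (va ∩ vb).ncard + 1 ≤ k := hord
    have hedgeAB : ∀ u w, G.Adj u w → (u ∈ va ∧ w ∈ va) ∨ (u ∈ vb ∧ w ∈ vb) := by
      intro u w h
      rcases s.adj_A_or_B h with h' | h'
      · exact Or.inl ⟨h'.fst_mem, h'.snd_mem⟩
      · exact Or.inr ⟨h'.fst_mem, h'.snd_mem⟩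
    have hedgeBA : ∀ u w, G.Adj u w → (u ∈ vb ∧ w ∈ vb) ∨ (u ∈ va ∧ w ∈ va) :=
      fun u w h => (hedgeAB u w h).symm
    have hcoverAB : ∀ x : V, x ∈ va ∨ x ∈ vb := s.mem_A_or_B
    have hbagOsub : bagO ⊆ U := by
      rintro x (hx | hx)
      · exact hR₂U hx
      · exact hx.2
    have hRbagO : R₂ ⊆ bagO := Set.subset_union_left
    have hbagOcard : bagO.ncard ≤ 8 * k - 9 := by
      have h1 := Set.ncard_union_le R₂ ((va ∩ vb) ∩ U)
      rw [← hbagO_def] at h1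
      have h2 : ((va ∩ vb) ∩ U).ncard ≤ (va ∩ vb).ncard :=
        Set.ncard_le_ncard Set.inter_subset_left (Set.toFinite _)
      omega
    have hINV' : ∀ u ∈ U \ bagO, ∀ w, G.Adj u w → w ∈ U := by
      rintro u ⟨huU, huO⟩ w hw
      exact hINV u ⟨huU, fun hr => huO (hRbagO (hRR₂ hr))⟩ w hw
    have hmidO : va ∩ vb ∩ U ⊆ bagO := Set.subset_union_right
    -- components
    set Cof : V → Set V := fun v => {w | ReachOutside G bagO v w} with hCof_def
    have hCrefl : ∀ v, v ∉ bagO → v ∈ Cof v := fun v hv => ReachOutside.refl hv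
    have hCsub : ∀ v ∈ U \ bagO, Cof v ⊆ U \ bagO := fun v hv => comp_confine hINV' hv
    have hCeq : ∀ v, ∀ w ∈ Cof v, Cof w = Cof v := fun v w hw => comp_eq hw
    have hCsideA : ∀ v ∈ U \ bagO, v ∈ exA → Cof v ⊆ exA :=
      fun v hv hvA => comp_side va vb hedgeAB hmidO hINV' hv hvA
    have hCsideB : ∀ v ∈ U \ bagO, v ∈ exB → Cof v ⊆ exB := by
      intro v hv hvB
      refine comp_side vb va hedgeBA ?_ hINV' hv hvB
      rw [Set.inter_comm vb va]
      exact hmidO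
    have hNC : ∀ v ∈ U \ bagO, ∀ w ∈ Cof v, ∀ y, G.Adj w y → y ∉ Cof v → y ∈ bagO := by
      intro v hv w hw y hadj hy
      by_contra hyO
      exact hy (ReachOutside.step hw hadj hyO)
    -- the two counting conditions
    set QA : Prop := 4 * k ≤ 3 * (R₂ ∩ exA).ncard + eps U R₂ va + 4 with hQA_def
    set QB : Prop := 4 * k ≤ 3 * (R₂ ∩ exB).ncard + eps U R₂ vb + 4 with hQB_def
    set Cond : Set V → Prop :=
      fun C => (∃ v ∈ U \ bagO, C = Cof v) ∧ ((C ⊆ exA ∧ QB) ∨ (C ⊆ exB ∧ QA))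
      with hCond_def
    set RC : Set V → Set V := fun C => bagO ∩ {y | ∃ w ∈ C, G.Adj w y} with hRC_def
    set UC : Set V → Set V := fun C => C ∪ RC C with hUC_def
    -- facts about recursed components
    have hCUbag : ∀ C, Cond C → C ⊆ U \ bagO := by
      rintro C ⟨⟨v, hv, rfl⟩, -⟩
      exact hCsub v hv
    have hRCbagO : ∀ C, RC C ⊆ bagO := fun C => Set.inter_subset_left
    have hUCU : ∀ C, Cond C → UC C ⊆ U := by
      rintro C hC x (hx | hx)
      · exact (hCUbag C hC hx).1
      · exact hbagOsub (hRCbagO C hx)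
    have hCRCdisj : ∀ C, Cond C → UC C \ RC C = C := by
      intro C hC
      apply Set.Subset.antisymm
      · rintro x ⟨hx | hx, hx'⟩
        · exact hx
        · exact absurd hx hx'
      · intro x hx
        exact ⟨Or.inl hx, fun hr => (hCUbag C hC hx).2 (hRCbagO C hr)⟩
    have hRCA : ∀ C, Cond C → C ⊆ exA → RC C ⊆ (R₂ ∩ exA) ∪ (va ∩ vb) := by
      rintro C hC hCA y ⟨hyO, w, hwC, hadj⟩
      have hwA : w ∈ exA := hCA hwC
      have hyA : y ∈ va := by
        rcases hedgeAB w y hadj with ⟨-, h⟩ | ⟨h, -⟩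
        · exact h
        · exact absurd h hwA.2
      rcases hyO with hy | hy
      · by_cases hyb : y ∈ vb
        · exact Or.inr ⟨hyA, hyb⟩
        · exact Or.inl ⟨hy, hyA, hyb⟩
      · exact Or.inr hy.1
    have hRCB : ∀ C, Cond C → C ⊆ exB → RC C ⊆ (R₂ ∩ exB) ∪ (va ∩ vb) := by
      rintro C hC hCB y ⟨hyO, w, hwC, hadj⟩
      have hwB : w ∈ exB := hCB hwC
      have hyB : y ∈ vb := by
        rcases hedgeBA w y hadj with ⟨-, h⟩ | ⟨h, -⟩
        · exact h
        · exact absurd h hwB.2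
      rcases hyO with hy | hy
      · by_cases hya : y ∈ va
        · exact Or.inr ⟨hya, hyB⟩
        · exact Or.inl ⟨hy, hyB, hya⟩
      · exact Or.inr hy.1
    have hdisjAB : (R₂ ∩ exA).ncard + (R₂ ∩ exB).ncard ≤ R₂.ncard := by
      rw [← Set.ncard_union_eq (by
        refine Set.disjoint_left.mpr ?_
        rintro x ⟨-, hxA⟩ ⟨-, hxB⟩
        exact hxA.2 hxB.1) (Set.toFinite _) (Set.toFinite _)]
      exact Set.ncard_le_ncard (by
        rintro x (hx | hx) <;> exact hx.1) (Set.toFinite _)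
    have hRCcard : ∀ C, Cond C → (RC C).ncard ≤ 7 * k - 8 := by
      intro C hC
      rcases hC.2 with ⟨hside, hq⟩ | ⟨hside, hq⟩
      · have h1 := Set.ncard_le_ncard (hRCA C hC hside) (Set.toFinite _)
        have h2 := Set.ncard_union_le (R₂ ∩ exA) (va ∩ vb)
        have h3 := eps_le_one U R₂ vb
        rw [hQB_def] at hq
        omega
      · have h1 := Set.ncard_le_ncard (hRCB C hC hside) (Set.toFinite _)
        have h2 := Set.ncard_union_le (R₂ ∩ exB) (va ∩ vb)
        have h3 := eps_le_one U R₂ va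
        rw [hQA_def] at hq
        omega
    have hURmono : U \ R₂ ⊆ U \ R := fun x hx => ⟨hx.1, fun h => hx.2 (hRR₂ h)⟩
    have hCsubR₂ : ∀ C, Cond C → C ⊆ U \ R₂ := by
      intro C hC x hx
      exact ⟨(hCUbag C hC hx).1, fun h => (hCUbag C hC hx).2 (hRbagO h)⟩
    have hmeas : ∀ C, Cond C → C.ncard * (7 * k) + (RC C).ncard ≤ n := by
      intro C hC
      have hCsR : C ⊆ U \ R := (hCsubR₂ C hC).trans hURmono
      have hCle : C.ncard ≤ (U \ R).ncard := Set.ncard_le_ncard hCsR (Set.toFinite _)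
      have h3 := hRCcard C hC
      have h3' : (RC C).ncard + 8 ≤ 7 * k := by omega
      by_cases hlt : C.ncard < (U \ R).ncard
      · have h1 : (C.ncard + 1) * (7 * k) ≤ (U \ R).ncard * (7 * k) :=
          Nat.mul_le_mul_right _ hlt
        have h2 : C.ncard * (7 * k) + 7 * k = (C.ncard + 1) * (7 * k) := by ring
        rw [← h2] at h1
        linarith [hn]
      · have hCcardeq : (U \ R).ncard ≤ C.ncard := by omega
        have hCeqUR : C = U \ R := Set.eq_of_subset_of_ncard_le hCsR hCcardeq
        have hUR₂eq : U \ R₂ = C := by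
          refine Set.Subset.antisymm ?_ (hCsubR₂ C hC)
          rw [hCeqUR]
          exact hURmono
        have hR₂R : R₂ = R := by
          refine Set.Subset.antisymm ?_ hRR₂
          intro x hx
          by_contra hxR
          have : x ∈ C := by rw [← hUR₂eq] at *; exact absurd (hRbagO hx) ((hCUbag C hC (by rw [hUR₂eq] at *; exact (by exact hCeqUR ▸ ⟨hR₂U hx, hxR⟩))).2) 
          exact (hCUbag C hC this).2 (hRbagO hx)
        have hmidR₂ : (va ∩ vb) ∩ U ⊆ R₂ := by
          intro x hx
          by_contra hxR₂
          have hxC : x ∈ C := by rw [← hUR₂eq]; exact ⟨hx.2, hxR₂⟩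
          exact (hCUbag C hC hxC).2 (hmidO hx)
        have hbagOR₂ : bagO = R₂ := by
          refine Set.Subset.antisymm ?_ hRbagO
          rw [hbagO_def]
          exact Set.union_subset (le_refl _) hmidR₂
        have hcard_eq : C.ncard = (U \ R).ncard := by omega
        have hRRcard : R₂.ncard = R.ncard := by rw [hR₂R]
        -- now the side analysis gives (RC C).ncard < R.ncard
        have hRC_lt : (RC C).ncard + 1 ≤ R.ncard := by
          rcases hC.2 with ⟨hside, hq⟩ | ⟨hside, hq⟩
          · have hepsB : eps U R₂ vb = 0 := by
              refine eps_eq_zero ?_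
              ext x
              simp only [Set.mem_inter_iff, Set.mem_empty_iff_false, iff_false, not_and]
              intro hx hxvb
              have hxC : x ∈ C := by rw [← hUR₂eq]; exact hx
              exact (hside hxC).2 hxvb
            rw [hQB_def, hepsB] at hq
            have hRCsub' : RC C ⊆ R₂ ∩ va := by
              intro y hy
              have h' := hRCA C hC hside hy
              have hyR₂ : y ∈ R₂ := by rw [← hbagOR₂]; exact (hRCbagO C) hy
              rcases h' with h' | h'
              · exact ⟨hyR₂, h'.2.1⟩
              · exact ⟨hyR₂, h'.1⟩
            have hdisj2 : (R₂ ∩ va).ncard + (R₂ ∩ exB).ncard ≤ R₂.ncard := by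
              rw [← Set.ncard_union_eq (by
                refine Set.disjoint_left.mpr ?_
                rintro x ⟨-, hxA⟩ ⟨-, hxB⟩
                exact hxB.2 hxA) (Set.toFinite _) (Set.toFinite _)]
              exact Set.ncard_le_ncard (by rintro x (hx | hx) <;> exact hx.1) (Set.toFinite _)
            have h5 := Set.ncard_le_ncard hRCsub' (Set.toFinite _)
            omega
          · have hepsA : eps U R₂ va = 0 := by
              refine eps_eq_zero ?_
              ext x
              simp only [Set.mem_inter_iff, Set.mem_empty_iff_false, iff_false, not_and]
              intro hx hxva
              have hxC : x ∈ C := by rw [← hUR₂eq]; exact hx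
              exact (hside hxC).2 hxva
            rw [hQA_def, hepsA] at hq
            have hRCsub' : RC C ⊆ R₂ ∩ vb := by
              intro y hy
              have h' := hRCB C hC hside hy
              have hyR₂ : y ∈ R₂ := by rw [← hbagOR₂]; exact (hRCbagO C) hy
              rcases h' with h' | h'
              · exact ⟨hyR₂, h'.2.1⟩
              · exact ⟨hyR₂, h'.2⟩
            have hdisj2 : (R₂ ∩ vb).ncard + (R₂ ∩ exA).ncard ≤ R₂.ncard := by
              rw [← Set.ncard_union_eq (by
                refine Set.disjoint_left.mpr ?_
                rintro x ⟨-, hxA⟩ ⟨-, hxB⟩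
                exact hxB.2 hxA) (Set.toFinite _) (Set.toFinite _)]
              exact Set.ncard_le_ncard (by rintro x (hx | hx) <;> exact hx.1) (Set.toFinite _)
            have h5 := Set.ncard_le_ncard hRCsub' (Set.toFinite _)
            omega
        rw [hcard_eq]
        linarith [hn]
    have hINVC : ∀ C, (hC : Cond C) → ∀ u ∈ UC C \ RC C, ∀ w, G.Adj u w → w ∈ UC C := by
      intro C hC u hu w hadj
      rw [hCRCdisj C hC] at hu
      have huUO : u ∈ U \ bagO := hCUbag C hC hu
      by_cases hwO : w ∈ bagO
      · exact Or.inr ⟨hwO, u, hu, hadj⟩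
      · obtain ⟨v₀, hv₀, hCv⟩ := hC.1
        left
        rw [hCv]
        have huC : ReachOutside G bagO v₀ u := by
          have : u ∈ Cof v₀ := hCv ▸ hu
          exact this
        exact huC.step hadj hwO
    have hpieces : ∀ C, Cond C → Nonempty (Piece G S k (UC C) (RC C)) := by
      intro C hC
      refine ih (UC C) (RC C) ?_ Set.subset_union_right (hINVC C hC) (hRCcard C hC)
      have := hmeas C hC
      rw [hCRCdisj C hC]
      exact this
    have pieces : ∀ C, (hC : Cond C) → Piece G S k (UC C) (RC C) :=
      fun C hC => (hpieces C hC).some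
    obtain ⟨f, hfinj⟩ : ∃ f : Set V → ℕ, Function.Injective f := by
      obtain ⟨m, ⟨e⟩⟩ := Finite.exists_equiv_fin (Set V)
      exact ⟨fun C => (e C : ℕ), fun a b hab => e.injective (Fin.val_injective hab)⟩
    set bagG : List ℕ → Set V := fun l =>
      List.casesOn l bagO
        (fun c l' => ⋃ (C : Set V), ⋃ (h : Cond C ∧ f C = c), (pieces C h.1).bag l')
      with hbagG_def
    have hG0 : bagG [] = bagO := rfl
    have hGcons : ∀ c l', bagG (c :: l') =
        ⋃ (C : Set V), ⋃ (h : Cond C ∧ f C = c), (pieces C h.1).bag l' := fun c l' => rfl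
    have hGconsmem : ∀ c l' v, v ∈ bagG (c :: l') ↔
        ∃ C, ∃ h : Cond C ∧ f C = c, v ∈ (pieces C h.1).bag l' := by
      intro c l' v
      rw [hGcons]
      simp only [Set.mem_iUnion]
    -- piece bags included in the glued bags
    have hpieceWsub : ∀ C (hC : Cond C) (l : List ℕ),
        (pieces C hC).bag l ⊆ bagG (f C :: l) := by
      intro C hC l v hv
      exact (hGconsmem _ _ _).mpr ⟨C, ⟨hC, rfl⟩, hv⟩
    have hWGmem : ∀ v, v ∈ (⋃ l, bagG l) ↔
        v ∈ bagO ∨ ∃ C, ∃ hC : Cond C, v ∈ ⋃ l, (pieces C hC).bag l := by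
      intro v
      constructor
      · intro hv
        obtain ⟨l, hl⟩ := Set.mem_iUnion.mp hv
        cases l with
        | nil => exact Or.inl hl
        | cons c l' =>
          obtain ⟨C, h, hv'⟩ := (hGconsmem _ _ _).mp hl
          exact Or.inr ⟨C, h.1, Set.mem_iUnion.mpr ⟨l', hv'⟩⟩
      · rintro (hv | ⟨C, hC, hv⟩)
        · exact Set.mem_iUnion.mpr ⟨[], hv⟩
        · obtain ⟨l, hl⟩ := Set.mem_iUnion.mp hv
          exact Set.mem_iUnion.mpr ⟨f C :: l, hpieceWsub C hC l hl⟩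
    -- a vertex of a piece not in bagO lies in its component
    have hpieceC : ∀ C (hC : Cond C) v, v ∈ (⋃ l, (pieces C hC).bag l) → v ∉ bagO → v ∈ C := by
      intro C hC v hv hvO
      obtain ⟨l, hl⟩ := Set.mem_iUnion.mp hv
      have := (pieces C hC).hWU l hl
      rcases this with h | h
      · exact h
      · exact absurd (hRCbagO C h) hvO
    -- uniqueness of the component containing a vertex
    have hCof_self : ∀ C (hC : Cond C) v, v ∈ C → C = Cof v := by
      intro C hC v hv
      obtain ⟨v₀, hv₀, rfl⟩ := hC.1
      exact (hCeq v₀ v hv).symm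
    have hunique : ∀ v, v ∉ bagO → ∀ C₁ C₂ (h₁ : Cond C₁) (h₂ : Cond C₂),
        v ∈ (⋃ l, (pieces C₁ h₁).bag l) → v ∈ (⋃ l, (pieces C₂ h₂).bag l) → C₁ = C₂ := by
      intro v hvO C₁ C₂ h₁ h₂ hv₁ hv₂
      rw [hCof_self C₁ h₁ v (hpieceC C₁ h₁ v hv₁ hvO),
        hCof_self C₂ h₂ v (hpieceC C₂ h₂ v hv₂ hvO)]
    -- each glued bag is empty, bagO, or a piece bag
    have hbag_cases : ∀ c l', bagG (c :: l') = ∅ ∨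
        ∃ C hC, f C = c ∧ bagG (c :: l') = (pieces C hC).bag l' := by
      intro c l'
      by_cases hex : ∃ C, Cond C ∧ f C = c
      · obtain ⟨C₀, hC₀, hfC₀⟩ := hex
        right
        refine ⟨C₀, hC₀, hfC₀, ?_⟩
        ext v
        rw [hGconsmem]
        constructor
        · rintro ⟨C, ⟨hC, hfC⟩, hv⟩
          have hCeq' : C = C₀ := hfinj (hfC.trans hfC₀.symm)
          subst hCeq'
          exact hv
        · intro hv
          exact ⟨C₀, ⟨hC₀, hfC₀⟩, hv⟩
      · left
        ext v
        rw [hGconsmem]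
        simp only [Set.mem_empty_iff_false, iff_false]
        rintro ⟨C, ⟨hC, hfC⟩, -⟩
        exact hex ⟨C, hC, hfC⟩
    -- membership in a component not covered: the S-case and edge case analysis
    have hsideof : ∀ v ∈ U \ bagO, v ∈ exA ∨ v ∈ exB := by
      intro v hv
      rcases hcoverAB v with h | h
      · by_cases h' : v ∈ vb
        · exact absurd (hmidO ⟨⟨h, h'⟩, hv.1⟩) hv.2
        · exact Or.inl ⟨h, h'⟩
      · by_cases h' : v ∈ va
        · exact absurd (hmidO ⟨⟨h', h⟩, hv.1⟩) hv.2
        · exact Or.inr ⟨h, h'⟩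
    -- if the component of v is not recursed, then S misses it
    have hdiscard : ∀ v ∈ U \ bagO, ¬ Cond (Cof v) → S ∩ Cof v = ∅ := by
      intro v hv hnc
      have hcomps : ∃ w ∈ U \ bagO, Cof v = Cof w := ⟨v, hv, rfl⟩
      rcases hsideof v hv with hside | hside
      · have hsub := hCsideA v hv hside
        have hnQB : ¬ QB := fun hq => hnc ⟨hcomps, Or.inl ⟨hsub, hq⟩⟩
        have hSvb : S ⊆ vb := by
          rcases hsB with h | h
          · exact h
          · exact absurd h hnQB
        ext x
        simp only [Set.mem_inter_iff, Set.mem_empty_iff_false, iff_false, not_and]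
        intro hxS hxC
        exact (hsub hxC).2 (hSvb hxS)
      · have hsub := hCsideB v hv hside
        have hnQA : ¬ QA := fun hq => hnc ⟨hcomps, Or.inr ⟨hsub, hq⟩⟩
        have hSva : S ⊆ va := by
          rcases hsA with h | h
          · exact h
          · exact absurd h hnQA
        ext x
        simp only [Set.mem_inter_iff, Set.mem_empty_iff_false, iff_false, not_and]
        intro hxS hxC
        exact (hsub hxC).2 (hSva hxS)
    -- neighbours of a component that lie in bagO belong to its attachment set
    have hRCmem : ∀ C, ∀ w ∈ C, ∀ y, G.Adj w y → y ∈ bagO → y ∈ RC C := by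
      intro C w hw y hadj hy
      exact ⟨hy, w, hw, hadj⟩
    refine ⟨⟨bagG, ?_, ?_, ?_, ?_, ?_, ?_, ?_⟩⟩
    · -- width
      intro l
      cases l with
      | nil => rw [hG0]; omega
      | cons c l' =>
        rcases hbag_cases c l' with h | ⟨C, hC, -, h⟩
        · rw [h]; simp
        · rw [h]; exact (pieces C hC).hwidth l'
    · -- root
      rw [hG0]
      exact hRR₂.trans hRbagO
    · -- bags inside U
      intro l
      cases l with
      | nil => rw [hG0]; exact hbagOsub
      | cons c l' =>
        rcases hbag_cases c l' with h | ⟨C, hC, -, h⟩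
        · rw [h]; exact Set.empty_subset _
        · rw [h]; exact ((pieces C hC).hWU l').trans (hUCU C hC)
    · -- S ∩ U covered
      intro v hv
      by_cases hvO : v ∈ bagO
      · exact Set.mem_iUnion.mpr ⟨[], by rw [hG0]; exact hvO⟩
      · have hvUO : v ∈ U \ bagO := ⟨hv.2, hvO⟩
        have hCond : Cond (Cof v) := by
          by_contra hnc
          have := hdiscard v hvUO hnc
          have hvC : v ∈ S ∩ Cof v := ⟨hv.1, hCrefl v hvO⟩
          rw [this] at hvC
          exact hvC
        have hvW : v ∈ ⋃ l, (pieces (Cof v) hCond).bag l := by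
          refine (pieces (Cof v) hCond).hS ⟨hv.1, ?_⟩
          exact Or.inl (hCrefl v hvO)
        exact (hWGmem v).mpr (Or.inr ⟨Cof v, hCond, hvW⟩)
    · -- edges
      intro u v hu hv hadj
      by_cases huO : u ∈ bagO <;> by_cases hvO : v ∈ bagO
      · exact ⟨[], by rw [hG0]; exact ⟨huO, hvO⟩⟩
      · -- u ∈ bagO, v ∉ bagO
        obtain ⟨C, hC, hvW⟩ := ((hWGmem v).mp hv).resolve_left hvO
        have hvC : v ∈ C := hpieceC C hC v hvW hvO
        have huRC : u ∈ RC C := hRCmem C v hvC u hadj.symm huO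
        have huW : u ∈ ⋃ l, (pieces C hC).bag l :=
          Set.mem_iUnion.mpr ⟨[], (pieces C hC).hroot huRC⟩
        obtain ⟨l', hul, hvl⟩ := (pieces C hC).hedge u v huW hvW hadj
        exact ⟨f C :: l', hpieceWsub C hC l' hul, hpieceWsub C hC l' hvl⟩
      · -- u ∉ bagO, v ∈ bagO
        obtain ⟨C, hC, huW⟩ := ((hWGmem u).mp hu).resolve_left huO
        have huC : u ∈ C := hpieceC C hC u huW huO
        have hvRC : v ∈ RC C := hRCmem C u huC v hadj hvO
        have hvW : v ∈ ⋃ l, (pieces C hC).bag l :=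
          Set.mem_iUnion.mpr ⟨[], (pieces C hC).hroot hvRC⟩
        obtain ⟨l', hul, hvl⟩ := (pieces C hC).hedge u v huW hvW hadj
        exact ⟨f C :: l', hpieceWsub C hC l' hul, hpieceWsub C hC l' hvl⟩
      · -- neither in bagO
        obtain ⟨C, hC, huW⟩ := ((hWGmem u).mp hu).resolve_left huO
        obtain ⟨C', hC', hvW⟩ := ((hWGmem v).mp hv).resolve_left hvO
        have huC : u ∈ C := hpieceC C hC u huW huO
        have hvC' : v ∈ C' := hpieceC C' hC' v hvW hvO
        have hCC' : C = C' := by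
          have h1 : C = Cof u := hCof_self C hC u huC
          have h2 : C' = Cof v := hCof_self C' hC' v hvC'
          have h3 : v ∈ Cof u := by
            have : ReachOutside G bagO u u := hCrefl u (fun h => huO h)
            exact this.step hadj hvO
          rw [h1, h2, hCeq u v h3]
        subst hCC'
        obtain ⟨l', hul, hvl⟩ := (pieces C hC).hedge u v huW hvW hadj
        exact ⟨f C :: l', hpieceWsub C hC l' hul, hpieceWsub C hC l' hvl⟩
    · -- TCprop
      intro v hv
      by_cases hvO : v ∈ bagO
      · refine ⟨[], by rw [hG0]; exact hvO, ?_⟩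
        intro x hx
        refine ⟨List.nil_prefix, ?_⟩
        intro z hz hzx
        cases z with
        | nil => rw [hG0]; exact hvO
        | cons cz z' =>
          cases x with
          | nil => exact absurd (List.prefix_nil.mp hzx) (by simp)
          | cons cx x' =>
            obtain ⟨head_eq, hzx'⟩ := List.cons_prefix_cons.mp hzx
            subst head_eq
            obtain ⟨C, ⟨hC, hfC⟩, hvx'⟩ := (hGconsmem _ _ _).mp hx
            have hvW : v ∈ ⋃ l, (pieces C hC).bag l := Set.mem_iUnion.mpr ⟨x', hvx'⟩
            have hvRC : v ∈ RC C := by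
              have := hpieceC C hC v hvW
              by_contra hvnR
              rcases (pieces C hC).hWU x' hvx' with h | h
              · exact (hCUbag C hC h).2 hvO
              · exact hvnR h
            have hvroot : v ∈ (pieces C hC).bag [] := (pieces C hC).hroot hvRC
            obtain ⟨t_c, htc_mem, htc⟩ := (pieces C hC).hTC v hvW
            have htc_nil : t_c = [] := List.prefix_nil.mp (htc [] hvroot).1
            subst htc_nil
            have hvz' : v ∈ (pieces C hC).bag z' := (htc x' hvx').2 z' List.nil_prefix hzx'
            exact (hGconsmem _ _ _).mpr ⟨C, ⟨hC, hfC⟩, hvz'⟩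
      · obtain ⟨C, hC, hvW⟩ := ((hWGmem v).mp hv).resolve_left hvO
        have hvC : v ∈ C := hpieceC C hC v hvW hvO
        obtain ⟨t_c, htc_mem, htc⟩ := (pieces C hC).hTC v hvW
        refine ⟨f C :: t_c, hpieceWsub C hC t_c htc_mem, ?_⟩
        intro x hx
        cases x with
        | nil => exact absurd (hG0 ▸ hx) hvO
        | cons cx x' =>
          obtain ⟨C', ⟨hC', hfC'⟩, hvx'⟩ := (hGconsmem _ _ _).mp hx
          have hCC' : C = C' := hunique v hvO C C' hC hC' hvW (Set.mem_iUnion.mpr ⟨x', hvx'⟩)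
          subst hCC'
          have hcx : cx = f C := hfC'.symm
          subst hcx
          constructor
          · exact List.cons_prefix_cons.mpr ⟨rfl, (htc x' hvx').1⟩
          · intro z hz hzx
            cases z with
            | nil => exact absurd (List.prefix_nil.mp hz) (by simp)
            | cons cz z' =>
              obtain ⟨hE, hz'⟩ := List.cons_prefix_cons.mp hz
              obtain ⟨-, hzx'⟩ := List.cons_prefix_cons.mp hzx
              subst hE
              have : v ∈ (pieces C hC).bag z' := (htc x' hvx').2 z' hz' hzx'
              exact (hGconsmem _ _ _).mpr ⟨C, ⟨hC, rfl⟩, this⟩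
    · -- components outside the union
      intro v hvU hvW
      have hvO : v ∉ bagO := fun h => hvW (Set.mem_iUnion.mpr ⟨[], hG0 ▸ h⟩)
      have hvUO : v ∈ U \ bagO := ⟨hvU, hvO⟩
      have hbagOWG : bagO ⊆ ⋃ l, bagG l := fun x hx => Set.mem_iUnion.mpr ⟨[], hG0 ▸ hx⟩
      have hreachC : ∀ w, ReachOutside G (⋃ l, bagG l) v w → w ∈ Cof v :=
        fun w hw => hw.weaken hbagOWG
      by_cases hCond : Cond (Cof v)
      · -- recursed component: use the piece
        have hvUC : v ∈ UC (Cof v) := Or.inl (hCrefl v hvO)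
        have hvWC : v ∉ ⋃ l, (pieces (Cof v) hCond).bag l := by
          intro h
          obtain ⟨l, hl⟩ := Set.mem_iUnion.mp h
          exact hvW (Set.mem_iUnion.mpr ⟨f (Cof v) :: l, hpieceWsub _ hCond l hl⟩)
        obtain ⟨x_c, hx_c⟩ := (pieces (Cof v) hCond).hcomp v hvUC hvWC
        refine ⟨f (Cof v) :: x_c, ?_⟩
        intro w y hreach hadj hyW
        have hwC : w ∈ Cof v := hreachC w hreach
        have hreach' : ReachOutside G (⋃ l, (pieces (Cof v) hCond).bag l) v w := by
          refine hreach.weaken ?_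
          intro x hx
          obtain ⟨l, hl⟩ := Set.mem_iUnion.mp hx
          exact Set.mem_iUnion.mpr ⟨f (Cof v) :: l, hpieceWsub _ hCond l hl⟩
        have hyWC : y ∈ ⋃ l, (pieces (Cof v) hCond).bag l := by
          by_cases hyO : y ∈ bagO
          · exact Set.mem_iUnion.mpr ⟨[], (pieces _ hCond).hroot (hRCmem _ w hwC y hadj hyO)⟩
          · obtain ⟨C', hC', hyW'⟩ := ((hWGmem y).mp hyW).resolve_left hyO
            have hyC' : y ∈ C' := hpieceC C' hC' y hyW' hyO
            have hyCv : y ∈ Cof v := ReachOutside.step hwC hadj hyO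
            have : C' = Cof v := by
              rw [hCof_self C' hC' y hyC', hCeq v y hyCv]
            subst this
            exact hyW'
        have := hx_c w y hreach' hadj hyWC
        exact hpieceWsub _ hCond x_c this
      · -- discarded component: everything attaches to the root bag
        refine ⟨[], ?_⟩
        intro w y hreach hadj hyW
        have hwC : w ∈ Cof v := hreachC w hreach
        rw [hG0]
        by_cases hyO : y ∈ bagO
        · exact hyO
        · exfalso
          obtain ⟨C', hC', hyW'⟩ := ((hWGmem y).mp hyW).resolve_left hyO
          have hyC' : y ∈ C' := hpieceC C' hC' y hyW' hyO
          have hyCv : y ∈ Cof v := ReachOutside.step hwC hadj hyO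
          have : C' = Cof v := by
            rw [hCof_self C' hC' y hyC', hCeq v y hyCv]
          exact hCond (this ▸ hC')

end Main


/-- if `(G,S)` has no tangle of order `k`, then for every `R` with
`|R| ≤ 7k-8` there is a tree decomposition of `(G,S)` of width at most `10k-12`
with a bag containing `R`; in particular `tw(G,S) ≤ 10k-12`. -/
theorem tw_upper_of_no_tangle {V : Type} [Fintype V] (G : SimpleGraph V) (S : Set V)
    (k : ℕ) (hk : 2 ≤ k)
    (hno : ¬ ∃ 𝒯 : Set (Separation G), IsTangleS G S k 𝒯)
    (R : Set V) (hR : R.ncard ≤ 7 * k - 8) :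
    (∃ (ι : Type) (T : SimpleGraph ι) (d : TreeDecompS G S T),
      (∀ x, (d.bag x).ncard ≤ (10 * k - 12) + 1) ∧ ∃ x, R ⊆ d.bag x) ∧
    twS G S ≤ 10 * k - 12 := by
  obtain ⟨p⟩ := rec_main hk hno ((Set.univ \ R).ncard * (7 * k) + R.ncard) Set.univ R
    le_rfl (Set.subset_univ R) (fun u _ v _ => Set.mem_univ v) hR
  have hmain : ∃ (ι : Type) (T : SimpleGraph ι) (d : TreeDecompS G S T),
      (∀ x, (d.bag x).ncard ≤ (10 * k - 12) + 1) ∧ ∃ x, R ⊆ d.bag x := by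
    refine ⟨List ℕ, T0, ⟨T0_isTree, p.bag, ?_, p.hedge, ?_, ?_⟩, ?_, ⟨[], p.hroot⟩⟩
    · intro v hv
      exact p.hS ⟨hv, Set.mem_univ v⟩
    · intro v hv
      exact T0_bags_connected p.bag v (p.hTC v hv)
    · intro v hv
      exact p.hcomp v (Set.mem_univ v) hv
    · intro x
      have h2 : (10 * k - 12) + 1 = 10 * k - 11 := by omega
      rw [h2]
      exact p.hwidth x
  refine ⟨hmain, ?_⟩
  obtain ⟨ι, T, d, hw, -⟩ := hmain
  exact Nat.sInf_le ⟨ι, T, d, hw⟩
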